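/- Let n = 2l+1 be odd with n ≥ 2, let 0 ≤ k < n with k odd, let f_0,…,f_n be reals, and let t ∈ (x_k, x_{k+1}). Then p(t) = −(β β_f + Σ_{i=1}^{l−1} ξ_{2i+1} φ_{2i+1} + ψ ψ_f). -/

import Mathlib

/-!
Group the terms of `p(t)` in consecutive pairs `(x_0, x_1), (x_2, x_3), …, (x_{n-1}, x_n)`;
since `n` is odd there is an even number `n + 1` of nodes, so this uses every node exactly once.
Inside a pair the weights are `1, -1` (or `1/2, -1` and `1, -1/2` at the two ends), and each pair
of simple fractions combines into minus one term of the claimed sum: the interior pairs into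
`ξ_j φ_j`, the end pairs into `β β_f` and, after the reflection `t ↦ -t`, `x ↦ -x`, into `ψ ψ_f`.
-/

open Finset

namespace Barycentric

/- The quantities `η`, `θ`, `ξ_j`, `φ_j` of the statement; `ξ_j` and `φ_j` take the nodes
`a = x_{j-1}`, `b = x_j` and the values `u = f_{j-1}`, `v = f_j`. -/
noncomputable def eta (y z : ℝ) : ℝ := ((2 + z) + y) / (2 * (y - z) * (1 + y))

noncomputable def theta (u v y z : ℝ) : ℝ := (2 * (1 + y) * u - (y - z) * v) / ((2 + z) + y)

noncomputable def xi (a b t : ℝ) : ℝ := (b - a) / ((t - b) * (t - a))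

noncomputable def phi (a b u v t : ℝ) : ℝ :=
  (v + u) / 2 + (t - (b + a) / 2) * (v - u) / (b - a)

lemma endpoint_pair {y z : ℝ} (hy : -1 < y) (hz : -1 < z) (hyz : y ≠ z) (u v : ℝ) :
    v / 2 / (1 + y) - u / (y - z) = -(eta y z * theta u v y z) := by
  have h₁ : 1 + y ≠ 0 := by linarith
  have h₂ : y - z ≠ 0 := sub_ne_zero.2 hyz
  have h₃ : 2 + z + y ≠ 0 := by linarith
  unfold eta theta
  field_simp
  ring

lemma interior_pair {a b t : ℝ} (ha : t ≠ a) (hb : t ≠ b) (hab : a ≠ b) (u v : ℝ) :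
    u / (t - a) - v / (t - b) = -(xi a b t * phi a b u v t) := by
  have h₁ : t - a ≠ 0 := sub_ne_zero.2 ha
  have h₂ : t - b ≠ 0 := sub_ne_zero.2 hb
  have h₃ : b - a ≠ 0 := sub_ne_zero.2 hab.symm
  unfold xi phi
  field_simp
  ring

lemma endpoint_pair_reflect {y z : ℝ} (hy : y < 1) (hz : z < 1) (hyz : y ≠ z) (u v : ℝ) :
    u / (y - z) - v / 2 / (y - 1) = -(eta (-y) (-z) * theta u v (-y) (-z)) := by
  rw [← endpoint_pair (by linarith) (by linarith) (neg_injective.ne hyz), neg_sub_neg,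
    ← neg_sub y z, div_neg, ← sub_eq_add_neg, ← neg_sub 1 y, div_neg]
  ring

end Barycentric

open Barycentric

lemma Finset.sum_range_two_mul {M : Type*} [AddCommMonoid M] (g : ℕ → M) (m : ℕ) :
    ∑ i ∈ range (2 * m), g i = ∑ i ∈ range m, (g (2 * i) + g (2 * i + 1)) := by
  induction m with
  | zero => simp
  | succ m ih => rw [Nat.mul_succ, sum_range_succ, sum_range_succ, sum_range_succ, ih, add_assoc]

lemma Finset.sum_range_two_mul_add_two {M : Type*} [AddCommMonoid M] (g : ℕ → M) {l : ℕ}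
    (hl : 1 ≤ l) :
    ∑ i ∈ range (2 * l + 2), g i
      = (g 0 + g 1) + ∑ i ∈ Icc 1 (l - 1), (g (2 * i) + g (2 * i + 1))
        + (g (2 * l) + g (2 * l + 1)) := by
  obtain ⟨m, rfl⟩ : ∃ m, l = m + 1 := ⟨l - 1, by omega⟩
  rw [show 2 * (m + 1) + 2 = 2 * (m + 2) by ring, sum_range_two_mul, sum_range_succ,
    sum_range_eq_add_Ico _ (by omega), ← Ico_add_one_right_eq_Icc, Nat.add_sub_cancel]

lemma ne_of_mem_Ioo_of_strictMonoOn {α : Type*} [LinearOrder α] {x : ℕ → α} {n k : ℕ}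
    (hx : StrictMonoOn x (Set.Iic n)) (hk : k < n) {t : α} (ht : t ∈ Set.Ioo (x k) (x (k + 1)))
    {i : ℕ} (hi : i ≤ n) : t ≠ x i := by
  rcases le_or_gt i k with hik | hki
  · exact (ht.1.trans_le' (hx.monotoneOn hi hk.le hik)).ne'
  · exact (ht.2.trans_le (hx.monotoneOn (Nat.succ_le_of_lt hk) hi hki)).ne

theorem numerator_decomposition_odd_odd_general
    (n l k : ℕ) (hn : 2 ≤ n) (hl : n = 2 * l + 1) (hk : k < n)
    (x γ f : ℕ → ℝ)
    (hx0 : x 0 = -1) (hxn : x n = 1)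
    (hmono : ∀ i < n, x i < x (i + 1))
    (hγ0 : γ 0 = 1 / 2) (hγn : γ n = (-1 : ℝ) ^ n / 2)
    (hγ : ∀ i, 0 < i → i < n → γ i = (-1 : ℝ) ^ i)
    (t : ℝ) (ht : t ∈ Set.Ioo (x k) (x (k + 1))) :
    ∑ i ∈ Finset.range (n + 1), γ i * f i / (t - x i)
      = -((((2 + x 1) + t) / (2 * (t - x 1) * (1 + t)))
            * ((2 * (1 + t) * f 1 - (t - x 1) * f 0) / ((2 + x 1) + t))
          + (∑ i ∈ Finset.Icc 1 (l - 1),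
              ((x (2 * i + 1) - x (2 * i)) / ((t - x (2 * i + 1)) * (t - x (2 * i))))
                * ((f (2 * i + 1) + f (2 * i)) / 2
                   + (t - (x (2 * i + 1) + x (2 * i)) / 2)
                     * (f (2 * i + 1) - f (2 * i)) / (x (2 * i + 1) - x (2 * i))))
          + (((2 + -(x (n - 1))) + -t) / (2 * (-t - -(x (n - 1))) * (1 + -t)))
            * ((2 * (1 + -t) * f (n - 1) - (-t - -(x (n - 1))) * f n)
               / ((2 + -(x (n - 1))) + -t))) := by
  subst hl
  have hx : StrictMonoOn x (Set.Iic (2 * l + 1)) := strictMonoOn_Iic_of_lt_succ fun m hm ↦ by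
    simpa using hmono m hm
  have hne : ∀ i ≤ 2 * l + 1, t ≠ x i := fun i hi ↦ ne_of_mem_Ioo_of_strictMonoOn hx hk ht hi
  have ht₀ : -1 < t := hx0 ▸ ht.1.trans_le' (hx.monotoneOn (by simp) hk.le k.zero_le)
  have ht₁ : t < 1 := hxn ▸ ht.2.trans_le (hx.monotoneOn hk (by simp) hk)
  have hx₁ : -1 < x 1 := hx0 ▸ hmono 0 (by omega)
  have hx₂ₗ : x (2 * l) < 1 := hxn ▸ hmono (2 * l) (by omega)
  show _ = -(eta t (x 1) * theta (f 1) (f 0) t (x 1)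
    + ∑ i ∈ Icc 1 (l - 1), xi (x (2 * i)) (x (2 * i + 1)) t
        * phi (x (2 * i)) (x (2 * i + 1)) (f (2 * i)) (f (2 * i + 1)) t
    + eta (-t) (-x (2 * l)) * theta (f (2 * l)) (f (2 * l + 1)) (-t) (-x (2 * l)))
  rw [sum_range_two_mul_add_two _ (by omega : 1 ≤ l), neg_add, neg_add, ← sum_neg_distrib]
  congr 1; congr 1
  · rw [hγ0, hγ 1 (by omega) (by omega), hx0, ← endpoint_pair ht₀ hx₁ (hne 1 (by omega))]
    ring
  · refine sum_congr rfl fun i hi ↦ ?_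
    rw [mem_Icc] at hi
    rw [hγ (2 * i) (by omega) (by omega), hγ (2 * i + 1) (by omega) (by omega),
      (even_two_mul i).neg_one_pow, (odd_two_mul_add_one i).neg_one_pow,
      ← interior_pair (hne _ (by omega)) (hne _ (by omega)) (hmono _ (by omega)).ne]
    ring
  · rw [hγ (2 * l) (by omega) (by omega), hγn, hxn, (even_two_mul l).neg_one_pow,
      (odd_two_mul_add_one l).neg_one_pow, ← endpoint_pair_reflect ht₁ hx₂ₗ (hne _ (by omega))]
    ring

/-- Decomposition of the numerator `p(t)` of the second barycentric formula:
case `n = 2l+1` odd, `k` odd, `t ∈ (x_k, x_{k+1})`: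
`p(t) = -(β β_f + Σ_{i=1}^{l-1} ξ_{2i+1} φ_{2i+1} + ψ ψ_f)`. -/
theorem numerator_decomposition_odd_odd
    (n l k : ℕ) (hn : 2 ≤ n) (hl : n = 2 * l + 1) (hk : k < n) (hko : Odd k)
    (x γ f : ℕ → ℝ)
    (hx0 : x 0 = -1) (hxn : x n = 1)
    (hmono : ∀ i < n, x i < x (i + 1))
    (hγ0 : γ 0 = 1 / 2) (hγn : γ n = (-1 : ℝ) ^ n / 2)
    (hγ : ∀ i, 0 < i → i < n → γ i = (-1 : ℝ) ^ i)
    (t : ℝ) (ht : t ∈ Set.Ioo (x k) (x (k + 1))) :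
    ∑ i ∈ Finset.range (n + 1), γ i * f i / (t - x i)
      = -((((2 + x 1) + t) / (2 * (t - x 1) * (1 + t)))
            * ((2 * (1 + t) * f 1 - (t - x 1) * f 0) / ((2 + x 1) + t))
          + (∑ i ∈ Finset.Icc 1 (l - 1),
              ((x (2 * i + 1) - x (2 * i)) / ((t - x (2 * i + 1)) * (t - x (2 * i))))
                * ((f (2 * i + 1) + f (2 * i)) / 2
                   + (t - (x (2 * i + 1) + x (2 * i)) / 2)
                     * (f (2 * i + 1) - f (2 * i)) / (x (2 * i + 1) - x (2 * i))))
          + (((2 + -(x (n - 1))) + -t) / (2 * (-t - -(x (n - 1))) * (1 + -t)))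
            * ((2 * (1 + -t) * f (n - 1) - (-t - -(x (n - 1))) * f n)
               / ((2 + -(x (n - 1))) + -t))) :=
  numerator_decomposition_odd_odd_general n l k hn hl hk x γ f hx0 hxn hmono hγ0 hγn hγ t ht
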